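/- arXiv:1704.02943 — 2 statements merged into one kernel-verified Lean document; each statement's English description precedes it below -/
import Mathlib

section
/- Let X, Y be invertible real n×n matrices, M = X + iY, Φ = X⁻¹Y, C₀ = (I + ΦΦᵀ)^{-1/2}, S₀ = C₀Φ, P₀ = X C₀⁻¹. Then for any orthogonal U ∈ ℝ^{n×n}, the matrices C = UC₀, S = US₀, P = P₀Uᵀ satisfy S = CΦ, M = P(C + iS), and CCᵀ + SSᵀ = I. -/
open Matrix Complex

theorem amplitude_phase_decomposition_exists
    {n : ℕ} (X Y : Matrix (Fin n) (Fin n) ℝ)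
    (hX : IsUnit X) (hY : IsUnit Y)
    (Φ C₀ : Matrix (Fin n) (Fin n) ℝ)
    (hΦ : Φ = X⁻¹ * Y)
    (hC₀pd : C₀.PosDef)
    (hC₀sq : C₀ * C₀ = (1 + Φ * Φᵀ)⁻¹)
    (S₀ P₀ : Matrix (Fin n) (Fin n) ℝ)
    (hS₀ : S₀ = C₀ * Φ) (hP₀ : P₀ = X * C₀⁻¹)
    (U : Matrix (Fin n) (Fin n) ℝ) (hU : U * Uᵀ = 1)
    (C S P : Matrix (Fin n) (Fin n) ℝ)
    (hC : C = U * C₀) (hS : S = U * S₀) (hP : P = P₀ * Uᵀ) :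
    S = C * Φ ∧
    X.map (Complex.ofReal) + Complex.I • Y.map (Complex.ofReal)
      = P.map (Complex.ofReal) *
        (C.map (Complex.ofReal) + Complex.I • S.map (Complex.ofReal)) ∧
    C * Cᵀ + S * Sᵀ = 1 := by
  have hUtU : Uᵀ * U = 1 := mul_eq_one_comm.mp hU
  have hC₀unit : IsUnit C₀ := hC₀pd.isUnit
  have hC₀sym : C₀ᵀ = C₀ := hC₀pd.isHermitian.eq
  have hAunit : IsUnit (1 + Φ * Φᵀ) := by
    rw [← Matrix.isUnit_nonsing_inv_iff, ← hC₀sq]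
    exact hC₀unit.mul hC₀unit
  -- C₀ * A = C₀⁻¹
  have hC₀A : C₀ * (1 + Φ * Φᵀ) = C₀⁻¹ := by
    have h1 : C₀ * C₀ * (1 + Φ * Φᵀ) = 1 := by
      rw [hC₀sq, Matrix.nonsing_inv_mul _ (Matrix.isUnit_iff_isUnit_det _ |>.mp hAunit)]
    calc C₀ * (1 + Φ * Φᵀ) = C₀⁻¹ * (C₀ * C₀ * (1 + Φ * Φᵀ)) := by
            rw [← Matrix.mul_assoc, ← Matrix.mul_assoc,
              Matrix.nonsing_inv_mul _ (Matrix.isUnit_iff_isUnit_det _ |>.mp hC₀unit),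
              Matrix.one_mul]
      _ = C₀⁻¹ := by rw [h1, Matrix.mul_one]
  have hC₀AC₀ : C₀ * (1 + Φ * Φᵀ) * C₀ = 1 := by
    rw [hC₀A, Matrix.nonsing_inv_mul _ (Matrix.isUnit_iff_isUnit_det _ |>.mp hC₀unit)]
  have hXΦ : X * Φ = Y := by
    rw [hΦ, ← Matrix.mul_assoc,
      Matrix.mul_nonsing_inv _ (Matrix.isUnit_iff_isUnit_det _ |>.mp hX), Matrix.one_mul]
  have hXPC : X = P * C := by
    rw [hP, hC, hP₀, Matrix.mul_assoc (X * C₀⁻¹), ← Matrix.mul_assoc Uᵀ, hUtU,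
      Matrix.one_mul, Matrix.mul_assoc,
      Matrix.nonsing_inv_mul _ (Matrix.isUnit_iff_isUnit_det _ |>.mp hC₀unit), Matrix.mul_one]
  have hSCΦ : S = C * Φ := by rw [hS, hC, hS₀, Matrix.mul_assoc]
  have hYPS : Y = P * S := by
    rw [hSCΦ, ← Matrix.mul_assoc, ← hXPC, hXΦ]
  refine ⟨hSCΦ, ?_, ?_⟩
  · have hmul : ∀ A B : Matrix (Fin n) (Fin n) ℝ,
        (A * B).map Complex.ofReal = A.map Complex.ofReal * B.map Complex.ofReal := by
      intro A B
      exact Matrix.map_mul (f := Complex.ofRealHom)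
    rw [hXPC, hYPS, hmul, hmul, Matrix.mul_add, Matrix.mul_smul]
  · have : C * Cᵀ + S * Sᵀ = U * (C₀ * (1 + Φ * Φᵀ) * C₀) * Uᵀ := by
      rw [hSCΦ, hC, Matrix.transpose_mul, Matrix.transpose_mul, Matrix.transpose_mul, hC₀sym]
      noncomm_ring
    rw [this, hC₀AC₀, Matrix.mul_one, hU]
end

section
/- Let X, Y be invertible real n×n matrices, Φ = X⁻¹Y, C₀ = (I + ΦΦᵀ)^{-1/2}, S₀ = C₀Φ, P₀ = X C₀⁻¹, M = X + iY. If real n×n matrices C, S, P satisfy S = CΦ, M = P(C + iS), and CCᵀ + SSᵀ = I, then U := C C₀⁻¹ is orthogonal and C = UC₀, S = US₀, P = P₀Uᵀ. -/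
open Matrix Complex

/-- Extract real and imaginary parts from an equation of complexified real matrices. -/
lemma re_im_matrix_eq {n : ℕ} (A B A' B' : Matrix (Fin n) (Fin n) ℝ)
    (h : A.map (Complex.ofReal) + Complex.I • B.map (Complex.ofReal)
       = A'.map (Complex.ofReal) + Complex.I • B'.map (Complex.ofReal)) :
    A = A' ∧ B = B' := by
  have key : ∀ i j, A i j = A' i j ∧ B i j = B' i j := by
    intro i j
    have := congrFun (congrFun h i) j
    simpa [Matrix.map_apply, Complex.ext_iff] using this
  exact ⟨by ext i j; exact (key i j).1, by ext i j; exact (key i j).2⟩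

theorem amplitude_phase_decomposition_unique
    {n : ℕ} (X Y : Matrix (Fin n) (Fin n) ℝ)
    (hX : IsUnit X) (hY : IsUnit Y)
    (Φ C₀ : Matrix (Fin n) (Fin n) ℝ)
    (hΦ : Φ = X⁻¹ * Y)
    (hC₀pd : C₀.PosDef)
    (hC₀sq : C₀ * C₀ = (1 + Φ * Φᵀ)⁻¹)
    (S₀ P₀ : Matrix (Fin n) (Fin n) ℝ)
    (hS₀ : S₀ = C₀ * Φ) (hP₀ : P₀ = X * C₀⁻¹)
    (C S P : Matrix (Fin n) (Fin n) ℝ)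
    (h1 : S = C * Φ)
    (h2 : X.map (Complex.ofReal) + Complex.I • Y.map (Complex.ofReal)
      = P.map (Complex.ofReal) *
        (C.map (Complex.ofReal) + Complex.I • S.map (Complex.ofReal)))
    (h3 : C * Cᵀ + S * Sᵀ = 1) :
    (C * C₀⁻¹) * (C * C₀⁻¹)ᵀ = 1 ∧
    C = (C * C₀⁻¹) * C₀ ∧ S = (C * C₀⁻¹) * S₀ ∧ P = P₀ * (C * C₀⁻¹)ᵀ := by
  -- real/imaginary parts of h2
  have h2' : X.map (Complex.ofReal) + Complex.I • Y.map (Complex.ofReal)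
      = (P * C).map (Complex.ofReal) + Complex.I • (P * S).map (Complex.ofReal) := by
    rw [h2]
    have hm : ∀ A B : Matrix (Fin n) (Fin n) ℝ,
        (A * B).map (Complex.ofReal) = A.map Complex.ofReal * B.map Complex.ofReal := by
      intro A B
      exact Matrix.map_mul (f := Complex.ofRealHom)
    rw [hm, hm]
    rw [Matrix.mul_add, Matrix.mul_smul]
  obtain ⟨hXPC, hYPS⟩ := re_im_matrix_eq _ _ _ _ h2'
  -- C₀ facts
  have hC₀sym : C₀ᵀ = C₀ := by
    have := hC₀pd.isHermitian
    simpa [Matrix.IsHermitian, Matrix.conjTranspose_eq_transpose_of_trivial] using this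
  have hC₀det : IsUnit C₀.det := hC₀pd.det_pos.ne'.isUnit
  -- key identity : C * ((1 + Φ*Φᵀ) * Cᵀ) = 1
  have hId : C * ((1 + Φ * Φᵀ) * Cᵀ) = 1 := by
    have : C * ((1 + Φ * Φᵀ) * Cᵀ) = C * Cᵀ + S * Sᵀ := by
      rw [h1, Matrix.transpose_mul]
      noncomm_ring
    rw [this, h3]
  have hCdet : IsUnit C.det := Matrix.isUnit_det_of_right_inverse hId
  -- invertibility of 1 + Φ*Φᵀ
  have hinvdet : IsUnit (1 + Φ * Φᵀ)⁻¹.det := by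
    rw [← hC₀sq, Matrix.det_mul]
    exact hC₀det.mul hC₀det
  have hApdet : IsUnit (1 + Φ * Φᵀ).det :=
    Matrix.isUnit_nonsing_inv_det_iff.mp hinvdet
  have hinvinv : C₀⁻¹ * C₀⁻¹ = 1 + Φ * Φᵀ := by
    rw [← Matrix.mul_inv_rev, hC₀sq, Matrix.nonsing_inv_nonsing_inv _ hApdet]
  -- orthogonality
  have hUUt : (C * C₀⁻¹) * (C * C₀⁻¹)ᵀ = 1 := by
    rw [Matrix.transpose_mul, Matrix.transpose_nonsing_inv, hC₀sym]
    calc C * C₀⁻¹ * (C₀⁻¹ * Cᵀ) = C * ((C₀⁻¹ * C₀⁻¹) * Cᵀ) := by noncomm_ring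
    _ = 1 := by rw [hinvinv, hId]
  have hCeq : C = (C * C₀⁻¹) * C₀ := by
    rw [Matrix.mul_assoc, Matrix.nonsing_inv_mul _ hC₀det, Matrix.mul_one]
  refine ⟨hUUt, hCeq, ?_, ?_⟩
  · rw [hS₀, h1, ← Matrix.mul_assoc, Matrix.mul_assoc C C₀⁻¹ C₀,
      Matrix.nonsing_inv_mul _ hC₀det, Matrix.mul_one]
  · -- P = P₀ * Uᵀ
    have hCinv : C⁻¹ = (1 + Φ * Φᵀ) * Cᵀ := Matrix.inv_eq_right_inv hId
    have hP : P = X * C⁻¹ := by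
      rw [hXPC, Matrix.mul_assoc, Matrix.mul_nonsing_inv _ hCdet, Matrix.mul_one]
    rw [hP, hP₀, hCinv, Matrix.transpose_mul, Matrix.transpose_nonsing_inv, hC₀sym]
    calc X * ((1 + Φ * Φᵀ) * Cᵀ) = X * ((C₀⁻¹ * C₀⁻¹) * Cᵀ) := by rw [hinvinv]
    _ = X * C₀⁻¹ * (C₀⁻¹ * Cᵀ) := by noncomm_ring
end
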